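/- arXiv:1812.06050 — 2 statements merged into one kernel-verified Lean document; each statement's English description precedes it below -/
import Mathlib

section
/- Perfect security of the EHE quantum block encryption (core of Theorem 10): let f, g : (Fin n → ZMod 2) → (Fin n → ZMod 2) be bijections, and for keys k₁, k₂ : Fin n → ZMod 2 let U(k₁,k₂) = X^{g k₂} * H^{⊗n} * X^{f k₁}. Then for every complex matrix M indexed by I = (Fin n → ZMod 2) with Trace M = 1, (1/4^n) • ∑_{k₁,k₂ : I} U(k₁,k₂) * M * (U(k₁,k₂))ᴴ = (1/2^n) • 1. (Hence, for each fixed randomness (r₁,r₂), if F(·,r₁) and G(·,r₂) are permutations of the key space, the ciphertext averaged over uniformly random keys equals the totally mixed state, so the scheme E(F,G) is perfectly secure.) -/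
open Matrix BigOperators

/-- The inner product `a ⊙ b = ∑ i, a i * b i` in `ZMod 2`. -/
def bdot {n : ℕ} (a b : Fin n → ZMod 2) : ZMod 2 := ∑ i, a i * b i

/-- `χ(a,b) = (-1)^(a ⊙ b)` as a complex number. -/
noncomputable def chi {n : ℕ} (a b : Fin n → ZMod 2) : ℂ :=
  if bdot a b = 1 then -1 else 1

/-- The `n`-qubit Pauli string `X^a`: `|v⟩ ↦ |v ⊕ a⟩`. -/
noncomputable def PX {n : ℕ} (a : Fin n → ZMod 2) :
    Matrix (Fin n → ZMod 2) (Fin n → ZMod 2) ℂ :=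
  fun u v => if u = v + a then 1 else 0

/-- The `n`-qubit Pauli string `Z^b`: `|v⟩ ↦ (-1)^(b ⊙ v) |v⟩`. -/
noncomputable def PZ {n : ℕ} (b : Fin n → ZMod 2) :
    Matrix (Fin n → ZMod 2) (Fin n → ZMod 2) ℂ :=
  fun u v => if u = v then chi b v else 0

/-- The `n`-qubit Hadamard transform `H^{⊗n}`. -/
noncomputable def Hn (n : ℕ) :
    Matrix (Fin n → ZMod 2) (Fin n → ZMod 2) ℂ :=
  fun u v => (Real.sqrt (2 ^ n) : ℂ)⁻¹ * chi u v

/-!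
Since `H^{⊗n} X^a = Z^a H^{⊗n}`, the ciphertext is `X^b Z^a (H M H) Z^a X^b`, and because the keys
are mapped bijectively onto `(ZMod 2)ⁿ` the double sum is the full Pauli twirl of `N = H M H`.
Averaging `Z^a N Z^a` over `a` kills the off-diagonal entries (orthogonality of characters), and
averaging `X^b D X^b` over `b` spreads the diagonal uniformly, so the sum is `2ⁿ tr N • 1`; finally
`tr (H M H) = tr M = 1` because `H^{⊗n}` is a self-adjoint involution.
-/

lemma ZMod.pi_add_self {ι : Type*} (a : ι → ZMod 2) : a + a = 0 :=
  funext fun i => CharTwo.add_self_eq_zero (a i)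

lemma ZMod.pi_eq_add_iff {ι : Type*} {u v a : ι → ZMod 2} : u = v + a ↔ v = u + a := by
  constructor <;> rintro rfl <;> rw [add_assoc, ZMod.pi_add_self, add_zero]

lemma ZMod.pi_add_eq_zero_iff {ι : Type*} {u v : ι → ZMod 2} : u + v = 0 ↔ u = v := by
  rw [add_eq_zero_iff_eq_neg, neg_eq_iff_add_eq_zero.mpr (ZMod.pi_add_self v)]

section Characters

variable {n : ℕ}

lemma sign_add (x y : ZMod 2) :
    (if x + y = 1 then (-1 : ℂ) else 1) =
      (if x = 1 then -1 else 1) * (if y = 1 then -1 else 1) := by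
  have h01 : (0 : ZMod 2) ≠ 1 := by decide
  have h11 : (1 : ZMod 2) + 1 = 0 := by decide
  obtain rfl | rfl : x = 0 ∨ x = 1 := by decide +revert
  all_goals obtain rfl | rfl : y = 0 ∨ y = 1 := by decide +revert
  all_goals simp [h01, h11]

lemma chi_comm (a b : Fin n → ZMod 2) : chi a b = chi b a := by
  rw [chi, chi, bdot, bdot]
  simp only [mul_comm]

lemma chi_add_left (a b c : Fin n → ZMod 2) : chi (a + b) c = chi a c * chi b c := by
  simp only [chi, bdot, Pi.add_apply, add_mul, Finset.sum_add_distrib]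
  exact sign_add _ _

lemma chi_add_right (a b c : Fin n → ZMod 2) : chi a (b + c) = chi a b * chi a c := by
  rw [chi_comm, chi_add_left, chi_comm b, chi_comm c]

lemma star_chi (a b : Fin n → ZMod 2) : star (chi a b) = chi a b := by
  unfold chi; split_ifs <;> simp

lemma chi_zero_right (a : Fin n → ZMod 2) : chi a 0 = 1 := by
  simp [chi, bdot]

lemma chi_single_left {i : Fin n} {s : Fin n → ZMod 2} (hs : s i ≠ 0) :
    chi (Pi.single i 1) s = -1 := by
  have hsi : s i = 1 := (by decide : ∀ x : ZMod 2, x ≠ 0 → x = 1) _ hs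
  have hdot : bdot (Pi.single i 1) s = 1 := by
    change Pi.single i 1 ⬝ᵥ s = 1
    rw [single_dotProduct, one_mul, hsi]
  simp [chi, hdot]

/-- For `s ≠ 0`, translating by a basis vector `eᵢ` with `s i ≠ 0` flips the sign of every
term. -/
lemma sum_chi_left (s : Fin n → ZMod 2) :
    ∑ a, chi a s = if s = 0 then (2 : ℂ) ^ n else 0 := by
  split_ifs with hs
  · simp [hs, chi_zero_right]
  · obtain ⟨i, hi⟩ : ∃ i, s i ≠ 0 := Function.ne_iff.mp hs
    have hflip : ∑ a, chi a s = -∑ a, chi a s := by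
      conv_lhs => rw [← Equiv.sum_comp (Equiv.addRight (Pi.single i 1)) (fun a => chi a s)]
      simp [chi_add_left, chi_single_left hi, Finset.sum_neg_distrib]
    exact self_eq_neg.mp hflip

end Characters

section Operators

variable {n : ℕ}

lemma PZ_eq_diagonal (a : Fin n → ZMod 2) : PZ a = diagonal (chi a) := by
  ext u v
  by_cases h : u = v <;> simp [PZ, h]

lemma PX_mul_apply (a : Fin n → ZMod 2) (A : Matrix (Fin n → ZMod 2) (Fin n → ZMod 2) ℂ)
    (u v : Fin n → ZMod 2) : (PX a * A) u v = A (u + a) v := by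
  simp [mul_apply, PX, ZMod.pi_eq_add_iff (u := u)]

lemma mul_PX_apply (a : Fin n → ZMod 2) (A : Matrix (Fin n → ZMod 2) (Fin n → ZMod 2) ℂ)
    (u v : Fin n → ZMod 2) : (A * PX a) u v = A u (v + a) := by
  simp [mul_apply, PX]

lemma PX_conjTranspose (a : Fin n → ZMod 2) : (PX a)ᴴ = PX a := by
  ext u v
  simp [PX, conjTranspose_apply, ZMod.pi_eq_add_iff (u := v)]

lemma PZ_conjTranspose (a : Fin n → ZMod 2) : (PZ a)ᴴ = PZ a := by
  rw [PZ_eq_diagonal, diagonal_conjTranspose]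
  congr
  exact funext (star_chi a)

lemma Hn_conjTranspose : (Hn n)ᴴ = Hn n := by
  ext u v
  simp [Hn, conjTranspose_apply, star_chi, chi_comm]

lemma inv_sqrt_mul_inv_sqrt {x : ℝ} (hx : 0 ≤ x) :
    (Real.sqrt x : ℂ)⁻¹ * (Real.sqrt x : ℂ)⁻¹ = (x : ℂ)⁻¹ := by
  rw [← mul_inv, ← Complex.ofReal_mul, Real.mul_self_sqrt hx]

lemma Hn_mul_Hn : Hn n * Hn n = 1 := by
  ext u v
  have hentry : (Hn n * Hn n) u v =
      (Real.sqrt (2 ^ n) : ℂ)⁻¹ * (Real.sqrt (2 ^ n) : ℂ)⁻¹ * ∑ w, chi w (u + v) := by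
    simp only [mul_apply, Hn, Finset.mul_sum, chi_add_right]
    refine Finset.sum_congr rfl fun w _ => ?_
    rw [chi_comm u w]
    ring
  rw [hentry, inv_sqrt_mul_inv_sqrt (by positivity), sum_chi_left]
  simp only [ZMod.pi_add_eq_zero_iff, one_apply]
  split_ifs
  · push_cast
    exact inv_mul_cancel₀ (pow_ne_zero _ two_ne_zero)
  · exact mul_zero _

lemma Hn_mul_PX (a : Fin n → ZMod 2) : Hn n * PX a = PZ a * Hn n := by
  ext u v
  rw [mul_PX_apply, PZ_eq_diagonal, diagonal_mul]
  simp only [Hn, chi_add_right, chi_comm a u]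
  ring

lemma trace_Hn_mul_mul_Hn (M : Matrix (Fin n → ZMod 2) (Fin n → ZMod 2) ℂ) :
    (Hn n * M * Hn n).trace = M.trace := by
  rw [trace_mul_comm, ← Matrix.mul_assoc, Hn_mul_Hn, Matrix.one_mul]

lemma sum_PZ_mul_mul_PZ (N : Matrix (Fin n → ZMod 2) (Fin n → ZMod 2) ℂ) :
    ∑ a, PZ a * N * PZ a = (2 : ℂ) ^ n • diagonal N.diag := by
  ext u v
  have hterm : ∀ a, (PZ a * N * PZ a) u v = N u v * chi a (u + v) := fun a => by
    rw [PZ_eq_diagonal, mul_diagonal, diagonal_mul, chi_add_right]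
    ring
  simp only [Matrix.sum_apply, hterm, ← Finset.mul_sum, sum_chi_left, ZMod.pi_add_eq_zero_iff]
  by_cases h : u = v <;> simp [h, mul_comm]

lemma sum_PX_mul_diagonal_mul_PX (d : (Fin n → ZMod 2) → ℂ) :
    ∑ b, PX b * diagonal d * PX b = (∑ w, d w) • 1 := by
  ext u v
  simp only [Matrix.sum_apply, mul_PX_apply, PX_mul_apply, diagonal_apply, add_left_inj]
  by_cases h : u = v
  · simpa [h] using Equiv.sum_comp (Equiv.addLeft v) d
  · simp [h]

lemma sum_pauli_conj (N : Matrix (Fin n → ZMod 2) (Fin n → ZMod 2) ℂ) :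
    ∑ a, ∑ b, (PX b * PZ a) * N * (PX b * PZ a)ᴴ = ((2 : ℂ) ^ n * N.trace) • 1 := by
  have hconj : ∀ a b, (PX b * PZ a) * N * (PX b * PZ a)ᴴ = PX b * (PZ a * N * PZ a) * PX b :=
    fun a b => by
      rw [conjTranspose_mul, PX_conjTranspose, PZ_conjTranspose]
      simp only [Matrix.mul_assoc]
  simp_rw [hconj]
  rw [Finset.sum_comm]
  simp_rw [← Finset.sum_mul, ← Finset.mul_sum, sum_PZ_mul_mul_PZ, Matrix.mul_smul,
    Matrix.smul_mul, ← Finset.smul_sum, sum_PX_mul_diagonal_mul_PX, smul_smul]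
  rfl

lemma ehe_conj_eq_pauli_conj (a b : Fin n → ZMod 2)
    (M : Matrix (Fin n → ZMod 2) (Fin n → ZMod 2) ℂ) :
    (PX b * Hn n * PX a) * M * (PX b * Hn n * PX a)ᴴ =
      (PX b * PZ a) * (Hn n * M * Hn n) * (PX b * PZ a)ᴴ := by
  rw [Matrix.mul_assoc (PX b), Hn_mul_PX, ← Matrix.mul_assoc, conjTranspose_mul (PX b * PZ a),
    Hn_conjTranspose]
  simp only [Matrix.mul_assoc]

end Operators

theorem ehe_perfect_security (n : ℕ)
    (f g : (Fin n → ZMod 2) → (Fin n → ZMod 2))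
    (hf : Function.Bijective f) (hg : Function.Bijective g)
    (M : Matrix (Fin n → ZMod 2) (Fin n → ZMod 2) ℂ) (hM : M.trace = 1) :
    ((4 : ℂ) ^ n)⁻¹ • ∑ k₁ : Fin n → ZMod 2, ∑ k₂ : Fin n → ZMod 2,
        (PX (g k₂) * Hn n * PX (f k₁)) * M * (PX (g k₂) * Hn n * PX (f k₁))ᴴ =
      ((2 : ℂ) ^ n)⁻¹ • (1 : Matrix (Fin n → ZMod 2) (Fin n → ZMod 2) ℂ) := by
  have hkeys : ∑ k₁ : Fin n → ZMod 2, ∑ k₂ : Fin n → ZMod 2,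
        (PX (g k₂) * Hn n * PX (f k₁)) * M * (PX (g k₂) * Hn n * PX (f k₁))ᴴ =
      ∑ a, ∑ b, (PX b * PZ a) * (Hn n * M * Hn n) * (PX b * PZ a)ᴴ :=
    Fintype.sum_bijective f hf _ _ fun _ =>
      Fintype.sum_bijective g hg _ _ fun _ => ehe_conj_eq_pauli_conj _ _ M
  rw [hkeys, sum_pauli_conj, trace_Hn_mul_mul_Hn, hM, smul_smul, mul_one,
    show (4 : ℂ) ^ n = 2 ^ n * 2 ^ n by rw [← mul_pow]; norm_num]
  congr 1
  field_simp
end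

section
/- Let Ψ : (Fin n → ZMod 2) → ℂ be the n-fold tensor power of (|0⟩ + i|1⟩)/√2, i.e. Ψ u = (2^n)^{-1/2} · i^{wt(u)}, where wt(u) is the number of indices i with u i = 1. Then for every c : Fin n → ZMod 2, (X^c * Z^c).mulVec Ψ = (-i)^{wt(c)} • Ψ; that is, Ψ is an eigenvector of every X^c Z^c with a unimodular eigenvalue. (Key fact in the proof of Proposition 1.) -/
open Matrix BigOperators

/-- Hamming weight of a bit string. -/
def wt {n : ℕ} (u : Fin n → ZMod 2) : ℕ :=
  (Finset.univ.filter fun i => u i = 1).card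

/-! Ψ is the product state `(|0⟩ + i|1⟩)^⊗n / √(2^n)` and `X^c Z^c` acts qubit by qubit, applying
`XZ` where `c i = 1` and the identity elsewhere. Since `XZ (|0⟩ + i|1⟩) = -i (|0⟩ + i|1⟩)`, the
eigenvalue is `(-i)^wt(c)`. In coordinates, `(X^c Z^c Ψ)(u) = χ(c, u + c) Ψ(u + c)`, and both `χ` and
`i^wt` factor as products over the qubits, reducing everything to a one-bit identity. -/

theorem AddChar.map_sum_eq_prod {ι A M : Type*} [AddCommMonoid A] [CommMonoid M]
    (ψ : AddChar A M) (s : Finset ι) (f : ι → A) :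
    ψ (∑ i ∈ s, f i) = ∏ i ∈ s, ψ (f i) := by
  induction s using Finset.cons_induction with
  | empty => simp
  | cons i s hi ih => rw [Finset.sum_cons, Finset.prod_cons, AddChar.map_add_eq_mul, ih]

lemma zmodTwo_eq_zero_or_eq_one (x : ZMod 2) : x = 0 ∨ x = 1 := by
  revert x; decide

noncomputable def signChar : AddChar (ZMod 2) ℂ :=
  AddChar.zmodChar 2 (by norm_num : (-1 : ℂ) ^ 2 = 1)

lemma signChar_apply (x : ZMod 2) : signChar x = if x = 1 then -1 else 1 := by
  obtain rfl | rfl := zmodTwo_eq_zero_or_eq_one x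
  · simp
  · simp [signChar, AddChar.zmodChar_apply, ZMod.val_one]

lemma chi_eq_prod {n : ℕ} (a b : Fin n → ZMod 2) : chi a b = ∏ i, signChar (a i * b i) := by
  rw [chi, ← signChar_apply, bdot, AddChar.map_sum_eq_prod]

lemma pow_wt {n : ℕ} (z : ℂ) (u : Fin n → ZMod 2) :
    z ^ wt u = ∏ i, if u i = 1 then z else 1 := by
  rw [wt, ← Finset.prod_const, Finset.prod_filter]

lemma PX_mulVec {n : ℕ} (a : Fin n → ZMod 2) (ψ : (Fin n → ZMod 2) → ℂ) :
    PX a *ᵥ ψ = fun u => ψ (u + a) := by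
  ext u
  simp [mulVec, dotProduct, PX, ← ZModModule.sub_eq_add, eq_sub_iff_add_eq]

lemma PZ_mulVec {n : ℕ} (b : Fin n → ZMod 2) (ψ : (Fin n → ZMod 2) → ℂ) :
    PZ b *ᵥ ψ = fun u => chi b u * ψ u := by
  ext u
  simp [mulVec, dotProduct, PZ]

-- Coordinate `x` of `(XZ)^y (|0⟩ + i|1⟩) = (-i)^y (|0⟩ + i|1⟩)`.
lemma signChar_mul_add_mul_ite (x y : ZMod 2) :
    signChar (y * (x + y)) * (if x + y = 1 then Complex.I else 1) =
      (if y = 1 then -Complex.I else 1) * (if x = 1 then Complex.I else 1) := by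
  obtain rfl | rfl := zmodTwo_eq_zero_or_eq_one x <;>
    obtain rfl | rfl := zmodTwo_eq_zero_or_eq_one y <;>
    simp [signChar_apply, show (1 + 1 : ZMod 2) = 0 from rfl]

lemma chi_add_mul_I_pow_wt {n : ℕ} (c u : Fin n → ZMod 2) :
    chi c (u + c) * Complex.I ^ wt (u + c) = (-Complex.I) ^ wt c * Complex.I ^ wt u := by
  simp only [chi_eq_prod, pow_wt, ← Finset.prod_mul_distrib, Pi.add_apply,
    signChar_mul_add_mul_ite]

theorem psi_eigenvector (n : ℕ) (c : Fin n → ZMod 2) :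
    (PX c * PZ c).mulVec
        (fun u => (Real.sqrt (2 ^ n) : ℂ)⁻¹ * Complex.I ^ wt u) =
      (-Complex.I) ^ wt c •
        (fun u => (Real.sqrt (2 ^ n) : ℂ)⁻¹ * Complex.I ^ wt u) := by
  ext u
  rw [← mulVec_mulVec, PZ_mulVec, PX_mulVec]
  simp only [Pi.smul_apply, smul_eq_mul]
  linear_combination (Real.sqrt (2 ^ n) : ℂ)⁻¹ * chi_add_mul_I_pow_wt c u
end
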